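/- arXiv:2105.11996 — 2 statements merged into one kernel-verified Lean document; each statement's English description precedes it below -/
import Mathlib

section
/- Let c be a real constant with 1 ≤ c ≤ 2 and C > 0, and suppose that for every m ≥ 1 and every relation E ⊆ Fin m × Fin m, the polytope P_E = conv{(e_i, e_j) ∈ ℝ^m × ℝ^m : (i,j) ∈ E} (the edge polytope of the corresponding bipartite graph) is the image under an affine map of a bounded set cut out by at most C · m^c closed halfspaces. Then there is a constant C' such that for every even n and every subset A of the Boolean cube {0,1}^n, the convex hull of A is the image under an affine map of a bounded set cut out by at most C' · 2^{cn/2} closed halfspaces. -/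
/-- The Boolean cube `{0,1}^n` inside `ℝ^n`. -/
def booleanCube (n : ℕ) : Set (Fin n → ℝ) := {x | ∀ i, x i = 0 ∨ x i = 1}

/-- `Q ⊆ ℝ^m` is cut out by `k` closed halfspaces. -/
def CutOutBy {m : ℕ} (Q : Set (Fin m → ℝ)) (k : ℕ) : Prop :=
  ∃ (a : Fin k → Fin m → ℝ) (b : Fin k → ℝ),
    Q = {y | ∀ i, ∑ j, a i j * y j ≤ b i}

/-- The edge polytope of the bipartite graph on `Fin m ⊕ Fin m` with edge
relation `E ⊆ Fin m × Fin m`: the convex hull of the vectors `(e_i, e_j)`. -/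
def edgePolytope (m : ℕ) (E : Set (Fin m × Fin m)) : Set ((Fin m → ℝ) × (Fin m → ℝ)) :=
  convexHull ℝ {p | ∃ ij ∈ E, p = ((Pi.single ij.1 1 : Fin m → ℝ), (Pi.single ij.2 1 : Fin m → ℝ))}

/-!
Write `n = h + h` and `m = 2 ^ h`, and enumerate `{0,1}^h` as `v : Fin m → ℝ^h`. The linear map
`ℝ^m × ℝ^m → ℝ^n` sending `(e_i, e_j)` to the concatenation `(v_i, v_j)` maps the vertices
`(e_i, e_j)` onto all of `{0,1}^n`. So if `E` is the set of pairs whose image lies in `A`, it maps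
`P_E` onto `conv A`, and composing it with an extension of `P_E` gives an extension of `conv A`
with at most `C m^c = C 2^{cn/2}` facets.
-/

open Set

def Fin.appendLinearMap (R : Type*) [Semiring R] (a b : ℕ) :
    (Fin a → R) × (Fin b → R) →ₗ[R] (Fin (a + b) → R) where
  toFun p := Fin.append p.1 p.2
  map_add' p q := by
    ext k
    refine Fin.addCases (fun i => ?_) (fun i => ?_) k <;> simp
  map_smul' r p := by
    ext k
    refine Fin.addCases (fun i => ?_) (fun i => ?_) k <;> simp

@[simp]
lemma Fin.appendLinearMap_apply (R : Type*) [Semiring R] {a b : ℕ}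
    (p : (Fin a → R) × (Fin b → R)) : Fin.appendLinearMap R a b p = Fin.append p.1 p.2 :=
  rfl

lemma AffineMap.image_convexHull_image_preimage {𝕜 E F ι : Type*} [Ring 𝕜] [PartialOrder 𝕜]
    [AddCommGroup E] [Module 𝕜 E] [AddCommGroup F] [Module 𝕜 F] (L : E →ᵃ[𝕜] F) (g : ι → E)
    {A : Set F} (hA : A ⊆ range (L ∘ g)) :
    L '' convexHull 𝕜 (g '' (g ⁻¹' (L ⁻¹' A))) = convexHull 𝕜 A := by
  rw [L.image_convexHull, ← image_comp, ← preimage_comp, image_preimage_eq_inter_range,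
    inter_eq_left.mpr hA]

lemma booleanCube_append {a b : ℕ} {x : Fin (a + b) → ℝ} (hx : x ∈ booleanCube (a + b)) :
    ∃ y ∈ booleanCube a, ∃ z ∈ booleanCube b, Fin.append y z = x :=
  ⟨_, fun _ => hx _, _, fun _ => hx _, Fin.append_castAdd_natAdd⟩

def cubeVertex (h : ℕ) (i : Fin (2 ^ h)) : Fin h → ℝ :=
  fun j => (finFunctionFinEquiv.symm i j : ℝ)

lemma booleanCube_subset_range_cubeVertex (h : ℕ) : booleanCube h ⊆ range (cubeVertex h) := by
  intro x hx
  refine ⟨finFunctionFinEquiv fun j => if x j = 0 then 0 else 1, funext fun j => ?_⟩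
  rcases hx j with hj | hj <;> simp [cubeVertex, hj]

def edgeVertex (m : ℕ) (ij : Fin m × Fin m) : (Fin m → ℝ) × (Fin m → ℝ) :=
  (Pi.single ij.1 1, Pi.single ij.2 1)

lemma edgePolytope_eq_convexHull_image (m : ℕ) (E : Set (Fin m × Fin m)) :
    edgePolytope m E = convexHull ℝ (edgeVertex m '' E) := by
  simp only [edgePolytope, edgeVertex, Set.image, eq_comm]

def cubeDecoding (h : ℕ) : (Fin (2 ^ h) → ℝ) × (Fin (2 ^ h) → ℝ) →ₗ[ℝ] (Fin (h + h) → ℝ) :=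
  Fin.appendLinearMap ℝ h h ∘ₗ
    (Fintype.linearCombination ℝ (cubeVertex h)).prodMap
      (Fintype.linearCombination ℝ (cubeVertex h))

lemma cubeDecoding_edgeVertex (h : ℕ) (ij : Fin (2 ^ h) × Fin (2 ^ h)) :
    cubeDecoding h (edgeVertex (2 ^ h) ij) =
      Fin.append (cubeVertex h ij.1) (cubeVertex h ij.2) := by
  simp [cubeDecoding, edgeVertex]

lemma booleanCube_subset_range_cubeDecoding (h : ℕ) :
    booleanCube (h + h) ⊆ range (cubeDecoding h ∘ edgeVertex (2 ^ h)) := by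
  intro x hx
  obtain ⟨y, hy, z, hz, rfl⟩ := booleanCube_append hx
  obtain ⟨i, rfl⟩ := booleanCube_subset_range_cubeVertex h hy
  obtain ⟨j, rfl⟩ := booleanCube_subset_range_cubeVertex h hz
  exact ⟨(i, j), cubeDecoding_edgeVertex h (i, j)⟩

lemma natCast_two_pow_rpow (h : ℕ) (c : ℝ) :
    ((2 ^ h : ℕ) : ℝ) ^ c = 2 ^ (c * ((h + h : ℕ) : ℝ) / 2) := by
  rw [Nat.cast_pow, Nat.cast_ofNat, ← Real.rpow_natCast, ← Real.rpow_mul zero_le_two]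
  push_cast
  ring_nf

theorem bipartite_xc_implies_cube_xc_general (c C : ℝ)
    (hyp : ∀ m : ℕ, 1 ≤ m → ∀ E : Set (Fin m × Fin m),
      ∃ (d k : ℕ) (Q : Set (Fin d → ℝ))
        (π : (Fin d → ℝ) →ᵃ[ℝ] ((Fin m → ℝ) × (Fin m → ℝ))),
        (k : ℝ) ≤ C * (m : ℝ) ^ c ∧
        Bornology.IsBounded Q ∧ CutOutBy Q k ∧
        π '' Q = edgePolytope m E) :
    ∃ C' : ℝ, ∀ n : ℕ, Even n → ∀ A : Set (Fin n → ℝ), A ⊆ booleanCube n →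
      ∃ (d k : ℕ) (Q : Set (Fin d → ℝ)) (π : (Fin d → ℝ) →ᵃ[ℝ] (Fin n → ℝ)),
        (k : ℝ) ≤ C' * (2 : ℝ) ^ (c * (n : ℝ) / 2) ∧
        Bornology.IsBounded Q ∧ CutOutBy Q k ∧
        π '' Q = convexHull ℝ A := by
  refine ⟨C, ?_⟩
  rintro _ ⟨h, rfl⟩ A hA
  let L := (cubeDecoding h).toAffineMap
  obtain ⟨d, k, Q, π, hk, hQ, hQk, hπQ⟩ :=
    hyp (2 ^ h) Nat.one_le_two_pow (edgeVertex (2 ^ h) ⁻¹' (L ⁻¹' A))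
  refine ⟨d, k, Q, L.comp π, ?_, hQ, hQk, ?_⟩
  · rwa [← natCast_two_pow_rpow]
  · rw [AffineMap.coe_comp, image_comp, hπQ, edgePolytope_eq_convexHull_image]
    exact L.image_convexHull_image_preimage _ (hA.trans (booleanCube_subset_range_cubeDecoding h))

/-- If every bipartite edge polytope on `2m` vertices has extension complexity
`O(m^c)` with `1 ≤ c ≤ 2`, then every 0/1-polytope in `ℝ^n` (for even `n`) has
extension complexity `O(2^{cn/2})`. -/
theorem bipartite_xc_implies_cube_xc (c C : ℝ) (hc1 : 1 ≤ c) (hc2 : c ≤ 2) (hC : 0 < C)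
    (hyp : ∀ m : ℕ, 1 ≤ m → ∀ E : Set (Fin m × Fin m),
      ∃ (d k : ℕ) (Q : Set (Fin d → ℝ))
        (π : (Fin d → ℝ) →ᵃ[ℝ] ((Fin m → ℝ) × (Fin m → ℝ))),
        (k : ℝ) ≤ C * (m : ℝ) ^ c ∧
        Bornology.IsBounded Q ∧ CutOutBy Q k ∧
        π '' Q = edgePolytope m E) :
    ∃ C' : ℝ, ∀ n : ℕ, Even n → ∀ A : Set (Fin n → ℝ), A ⊆ booleanCube n →
      ∃ (d k : ℕ) (Q : Set (Fin d → ℝ)) (π : (Fin d → ℝ) →ᵃ[ℝ] (Fin n → ℝ)),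
        (k : ℝ) ≤ C' * (2 : ℝ) ^ (c * (n : ℝ) / 2) ∧
        Bornology.IsBounded Q ∧ CutOutBy Q k ∧
        π '' Q = convexHull ℝ A :=
  bipartite_xc_implies_cube_xc_general c C hyp
end

section
/- There is a constant C such that for every n ≥ 2 and every simple graph G on n vertices, the set D = {(e, f) : e an edge of G, f a non-edge of G, e and f share no vertex} can be partitioned into at most C · n · log₂ n subsets, each of which is a Cartesian product C' × C'' with C' a set of edges and C'' a set of non-edges. -/
/-!
Split the vertices `0, …, n-1` dyadically: a disjoint edge/non-edge pair `(e, f)` is handled at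
the unique level `ℓ` at which its four endpoints lie in one block of size `2 ^ (ℓ + 1)` but not in
one half of it. Within a block split into two halves, the pairs using both halves fall into
`O(size of the block)` rectangles, each pinned down by the block or by a single pivot vertex;
summing over the `O(log n)` levels gives `O(n log n)` rectangles.
-/

open Set Function

section RectPartition

variable {α β ι κ : Type*}

def IsRectPartition (D : Set (α × β)) (A : ι → Set α) (B : ι → Set β) : Prop :=
  (⋃ i, A i ×ˢ B i) = D ∧ Pairwise fun i j => Disjoint (A i ×ˢ B i) (A j ×ˢ B j)

namespace IsRectPartition

variable {D : Set (α × β)} {A : ι → Set α} {B : ι → Set β}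

theorem of_subset_of_unique (hsub : ∀ i, A i ×ˢ B i ⊆ D) (hcov : ∀ p ∈ D, ∃ i, p ∈ A i ×ˢ B i)
    (huniq : ∀ i j p, p ∈ A i ×ˢ B i → p ∈ A j ×ˢ B j → i = j) : IsRectPartition D A B :=
  ⟨Subset.antisymm (iUnion_subset hsub) fun p hp => mem_iUnion.2 (hcov p hp),
    fun i j hij => disjoint_left.2 fun p hi hj => hij (huniq i j p hi hj)⟩

theorem comp_equiv (h : IsRectPartition D A B) (e : κ ≃ ι) :
    IsRectPartition D (A ∘ e) (B ∘ e) :=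
  ⟨(e.iSup_comp (g := fun i => A i ×ˢ B i)).trans h.1,
    fun _ _ hij => h.2 (e.injective.ne hij)⟩

theorem iUnion {D : κ → Set (α × β)} (hD : Pairwise (Disjoint on D)) {A : κ → ι → Set α}
    {B : κ → ι → Set β} (h : ∀ k, IsRectPartition (D k) (A k) (B k)) :
    IsRectPartition (⋃ k, D k) (fun i : κ × ι => A i.1 i.2) (fun i => B i.1 i.2) := by
  refine ⟨?_, fun ⟨k, i⟩ ⟨k', i'⟩ hne => ?_⟩
  · exact iSup_prod.trans (iUnion_congr fun k => (h k).1)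
  · by_cases hk : k = k'
    · subst hk
      exact (h k).2 fun hi : i = i' => hne (hi ▸ rfl)
    · exact (hD hk).mono ((h k).1 ▸ subset_iUnion (fun i => A k i ×ˢ B k i) i)
        ((h k').1 ▸ subset_iUnion (fun i => A k' i ×ˢ B k' i) i')

end IsRectPartition

end RectPartition

section Dyadic

def InDyadicBlock (m : ℕ) (S : Set ℕ) : Prop := ∀ x ∈ S, ∀ y ∈ S, x / 2 ^ m = y / 2 ^ m

variable {S : Set ℕ} {m k ℓ : ℕ}

theorem InDyadicBlock.mono (h : InDyadicBlock m S) (hmk : m ≤ k) : InDyadicBlock k S := by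
  intro x hx y hy
  obtain ⟨j, rfl⟩ := Nat.exists_eq_add_of_le hmk
  simp only [pow_add, ← Nat.div_div_eq_div_mul, h x hx y hy]

theorem inDyadicBlock_zero_iff : InDyadicBlock 0 S ↔ S.Subsingleton := by
  simp [InDyadicBlock, Set.Subsingleton]

theorem inDyadicBlock_of_lt_two_pow (h : ∀ x ∈ S, x < 2 ^ m) : InDyadicBlock m S :=
  fun x hx y hy => by rw [Nat.div_eq_of_lt (h x hx), Nat.div_eq_of_lt (h y hy)]

theorem InDyadicBlock.iff_of_succ (h : InDyadicBlock (ℓ + 1) S) :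
    InDyadicBlock ℓ S ↔ ∀ x ∈ S, ∀ y ∈ S, (x / 2 ^ ℓ % 2 = 1 ↔ y / 2 ^ ℓ % 2 = 1) := by
  have hdiv : ∀ x, x / 2 ^ (ℓ + 1) = x / 2 ^ ℓ / 2 := fun x => by
    rw [pow_succ, Nat.div_div_eq_div_mul]
  refine ⟨fun h' x hx y hy => by rw [h' x hx y hy], fun h' x hx y hy => ?_⟩
  have hq := h x hx y hy
  have hbit := h' x hx y hy
  rw [hdiv, hdiv] at hq
  omega

theorem exists_dyadic_split_level {L : ℕ} (hS : ¬S.Subsingleton) (hL : ∀ x ∈ S, x < 2 ^ L) :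
    ∃ ℓ < L, InDyadicBlock (ℓ + 1) S ∧ ¬InDyadicBlock ℓ S := by
  classical
  have hex : ∃ m, InDyadicBlock m S := ⟨L, inDyadicBlock_of_lt_two_pow hL⟩
  have hpos : Nat.find hex ≠ 0 := fun h0 =>
    hS (inDyadicBlock_zero_iff.1 (h0 ▸ Nat.find_spec hex))
  refine ⟨Nat.find hex - 1, ?_, ?_, Nat.find_min hex (by omega)⟩
  · have : Nat.find hex ≤ L := Nat.find_le (inDyadicBlock_of_lt_two_pow hL)
    omega
  · rw [Nat.sub_add_cancel (Nat.one_le_iff_ne_zero.2 hpos)]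
    exact Nat.find_spec hex

end Dyadic

def blockHalf {V B : Type*} (blk : V → B) (upper : Set V) (b : B) (s : Prop) : Set V :=
  {x | blk x = b ∧ (x ∈ upper ↔ s)}

@[simp]
theorem mem_blockHalf {V B : Type*} {blk : V → B} {upper : Set V} {b : B} {s : Prop} {x : V} :
    x ∈ blockHalf blk upper b s ↔ blk x = b ∧ (x ∈ upper ↔ s) :=
  Iff.rfl

@[simp]
theorem Sym2.mk_mem_image2_mk {V : Type*} {S T : Set V} {a b : V} :
    s(a, b) ∈ image2 (s(·, ·)) S T ↔ a ∈ S ∧ b ∈ T ∨ b ∈ S ∧ a ∈ T := by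
  simp only [mem_image2, Sym2.eq_iff]
  grind

namespace SimpleGraph

section SplitCells

variable {V B : Type*} (G : SimpleGraph V)

theorem edgeSet_compl : Gᶜ.edgeSet = {s | ¬s.IsDiag ∧ s ∉ G.edgeSet} := by
  ext s
  induction s using Sym2.ind
  simp [compl_adj]

def edgeNonEdgePairs : Set (Sym2 V × Sym2 V) :=
  {p | p.1 ∈ G.edgeSet ∧ p.2 ∈ Gᶜ.edgeSet ∧ ∀ v ∈ p.1, v ∉ p.2}

def splitPairs (blk : V → B) (upper : Set V) : Set (Sym2 V × Sym2 V) :=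
  {p ∈ G.edgeNonEdgePairs | (∀ x ∈ (p.1 ∪ p.2 : Set V), ∀ y ∈ (p.1 ∪ p.2 : Set V), blk x = blk y) ∧
    ∃ x ∈ (p.1 ∪ p.2 : Set V), ∃ y ∈ (p.1 ∪ p.2 : Set V), x ∈ upper ∧ y ∉ upper}

theorem mk_mem_splitPairs {blk : V → B} {upper : Set V} {a b c d : V} :
    (s(a, b), s(c, d)) ∈ G.splitPairs blk upper ↔ G.Adj a b ∧ Gᶜ.Adj c d ∧
      a ≠ c ∧ a ≠ d ∧ b ≠ c ∧ b ≠ d ∧ blk b = blk a ∧ blk c = blk a ∧ blk d = blk a ∧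
      ¬((b ∈ upper ↔ a ∈ upper) ∧ (c ∈ upper ↔ a ∈ upper) ∧ (d ∈ upper ↔ a ∈ upper)) := by
  simp only [splitPairs, edgeNonEdgePairs, mem_ofPred_eq, mem_edgeSet, mem_union,
    SetLike.mem_coe, Sym2.mem_iff]
  constructor
  · intro h
    refine ⟨h.1.1, h.1.2.1, ?_, ?_, ?_, ?_, ?_, ?_, ?_, ?_⟩ <;> grind
  · intro h
    exact ⟨⟨h.1, h.2.1, by grind⟩, by grind, by grind⟩

inductive SplitCell (B V : Type*)
  | halves (b : B) (s : Bool)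
  | nonEdgeSpoke (v : V)
  | edgeSpoke (v : V)
  | crossingAdj (v : V)
  | crossingNonAdj (v : V)

namespace SplitCell

def equivSum : SplitCell B V ≃ (B × Bool) ⊕ V ⊕ V ⊕ V ⊕ V where
  toFun
    | halves b s => .inl (b, s)
    | nonEdgeSpoke v => .inr (.inl v)
    | edgeSpoke v => .inr (.inr (.inl v))
    | crossingAdj v => .inr (.inr (.inr (.inl v)))
    | crossingNonAdj v => .inr (.inr (.inr (.inr v)))
  invFun
    | .inl (b, s) => halves b s
    | .inr (.inl v) => nonEdgeSpoke v
    | .inr (.inr (.inl v)) => edgeSpoke v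
    | .inr (.inr (.inr (.inl v))) => crossingAdj v
    | .inr (.inr (.inr (.inr v))) => crossingNonAdj v
  left_inv i := by cases i <;> rfl
  right_inv i := by rcases i with ⟨_, _⟩ | _ | _ | _ | _ <;> rfl

instance [Fintype B] [Fintype V] : Fintype (SplitCell B V) := Fintype.ofEquiv _ equivSum.symm

theorem card [Fintype B] [Fintype V] :
    Fintype.card (SplitCell B V) = 2 * Fintype.card B + 4 * Fintype.card V := by
  simp only [Fintype.card_congr equivSum, Fintype.card_sum, Fintype.card_prod, Fintype.card_bool]
  ring

end SplitCell

variable (blk : V → B) (upper : Set V)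

/- In `crossingAdj v` the lower end of the edge is adjacent to `v` and that of the non-edge is
not, so the two are distinct; dually for `crossingNonAdj v`. A pair with both members crossing goes
to one of the two according to whether the lower end of its edge is adjacent to the upper end of
its non-edge. -/
open SplitCell in
def cellEdges : SplitCell B V → Set (Sym2 V)
  | halves b s => (blockHalf blk upper b s).sym2
  | nonEdgeSpoke v => (blockHalf blk upper (blk v) (v ∈ upper) \ {v}).sym2
  | edgeSpoke v => image2 (s(·, ·)) {v} (blockHalf blk upper (blk v) (v ∉ upper))
  | crossingAdj v => image2 (s(·, ·)) (blockHalf blk upper (blk v) False ∩ G.neighborSet v)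
      (blockHalf blk upper (blk v) True \ {v})
  | crossingNonAdj v => image2 (s(·, ·)) ({v} ∩ blockHalf blk upper (blk v) False)
      (blockHalf blk upper (blk v) True)

open SplitCell in
def cellNonEdges : SplitCell B V → Set (Sym2 V)
  | halves b s => (blockHalf blk upper b (¬s)).sym2
  | nonEdgeSpoke v => image2 (s(·, ·)) {v} (blockHalf blk upper (blk v) (v ∉ upper))
  | edgeSpoke v => (blockHalf blk upper (blk v) (v ∈ upper) \ {v}).sym2
  | crossingAdj v => image2 (s(·, ·)) ({v} ∩ blockHalf blk upper (blk v) True)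
      (blockHalf blk upper (blk v) False)
  | crossingNonAdj v => image2 (s(·, ·)) (blockHalf blk upper (blk v) True ∩ Gᶜ.neighborSet v)
      (blockHalf blk upper (blk v) False \ {v})

theorem mk_mem_cellRect {i : SplitCell B V} {a b c d : V} :
    (s(a, b), s(c, d)) ∈ (G.edgeSet ∩ G.cellEdges blk upper i) ×ˢ
        (Gᶜ.edgeSet ∩ G.cellNonEdges blk upper i) ↔
      (G.Adj a b ∧ s(a, b) ∈ G.cellEdges blk upper i) ∧
        Gᶜ.Adj c d ∧ s(c, d) ∈ G.cellNonEdges blk upper i :=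
  Iff.rfl

theorem cellRect_subset_splitPairs (i : SplitCell B V) :
    (G.edgeSet ∩ G.cellEdges blk upper i) ×ˢ (Gᶜ.edgeSet ∩ G.cellNonEdges blk upper i) ⊆
      G.splitPairs blk upper := by
  rintro ⟨e, f⟩ hp
  induction e using Sym2.ind with | _ a b => ?_
  induction f using Sym2.ind with | _ c d => ?_
  rw [mk_mem_cellRect] at hp
  simp only [mk_mem_splitPairs, compl_adj]
  rcases i with ⟨_, _ | _⟩ | _ | _ | _ | _ <;>
    simp only [cellEdges, cellNonEdges, mk_mem_sym2_iff, Sym2.mk_mem_image2_mk, mem_sdiff,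
      mem_inter_iff, mem_singleton_iff, mem_neighborSet, compl_adj, mem_blockHalf, iff_true,
      iff_false, Bool.false_eq_true] at hp <;>
    grind [Adj.ne, Adj.symm]

theorem eq_of_mem_cellRect {i j : SplitCell B V} {p : Sym2 V × Sym2 V}
    (hi : p ∈ (G.edgeSet ∩ G.cellEdges blk upper i) ×ˢ (Gᶜ.edgeSet ∩ G.cellNonEdges blk upper i))
    (hj : p ∈ (G.edgeSet ∩ G.cellEdges blk upper j) ×ˢ (Gᶜ.edgeSet ∩ G.cellNonEdges blk upper j)) :
    i = j := by
  obtain ⟨e, f⟩ := p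
  induction e using Sym2.ind with | _ a b => ?_
  induction f using Sym2.ind with | _ c d => ?_
  rw [mk_mem_cellRect] at hi hj
  rcases i with ⟨_, _ | _⟩ | _ | _ | _ | _ <;> rcases j with ⟨_, _ | _⟩ | _ | _ | _ | _ <;>
    simp only [cellEdges, cellNonEdges, mk_mem_sym2_iff, Sym2.mk_mem_image2_mk, mem_sdiff,
      mem_inter_iff, mem_singleton_iff, mem_neighborSet, compl_adj, mem_blockHalf, iff_true,
      iff_false, Bool.false_eq_true] at hi hj <;>
    grind [Adj.ne, Adj.symm]

theorem exists_mem_cellRect {p : Sym2 V × Sym2 V} (hp : p ∈ G.splitPairs blk upper) :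
    ∃ i, p ∈ (G.edgeSet ∩ G.cellEdges blk upper i) ×ˢ
      (Gᶜ.edgeSet ∩ G.cellNonEdges blk upper i) := by
  classical
  obtain ⟨e, f⟩ := p
  induction e using Sym2.ind with | _ a b => ?_
  induction f using Sym2.ind with | _ c d => ?_
  wlog hab : a ∈ upper → b ∈ upper generalizing a b
  · simpa only [Sym2.eq_swap] using this b a (by simpa only [Sym2.eq_swap] using hp) (by tauto)
  wlog hcd : c ∈ upper → d ∈ upper generalizing c d
  · simpa only [Sym2.eq_swap] using this d c (by simpa only [Sym2.eq_swap] using hp) (by tauto)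
  simp only [mk_mem_splitPairs, compl_adj] at hp
  refine ⟨if b ∈ upper → a ∈ upper then
      if d ∈ upper → c ∈ upper then
        if a ∈ upper then .halves (blk a) true else .halves (blk a) false
      else if a ∈ upper then .nonEdgeSpoke d else .nonEdgeSpoke c
    else if d ∈ upper → c ∈ upper then
      if c ∈ upper then .edgeSpoke b else .edgeSpoke a
    else if G.Adj a d then .crossingAdj d else .crossingNonAdj a, ?_⟩
  rw [mk_mem_cellRect]
  split_ifs <;>
    simp only [cellEdges, cellNonEdges, mk_mem_sym2_iff, Sym2.mk_mem_image2_mk, mem_sdiff,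
      mem_inter_iff, mem_singleton_iff, mem_neighborSet, compl_adj, mem_blockHalf, iff_true,
      iff_false, Bool.false_eq_true] <;>
    grind [Adj.symm]

theorem isRectPartition_splitPairs :
    IsRectPartition (G.splitPairs blk upper) (fun i => G.edgeSet ∩ G.cellEdges blk upper i)
      (fun i => Gᶜ.edgeSet ∩ G.cellNonEdges blk upper i) :=
  .of_subset_of_unique (G.cellRect_subset_splitPairs blk upper)
    (fun _ => G.exists_mem_cellRect blk upper) fun _ _ _ => G.eq_of_mem_cellRect blk upper

end SplitCells

section DyadicLevels

variable {n : ℕ} (G : SimpleGraph (Fin n))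

def dyadicBlock (ℓ : ℕ) (x : Fin n) : Fin n :=
  ⟨x / 2 ^ (ℓ + 1), (Nat.div_le_self _ _).trans_lt x.2⟩

def dyadicUpper (ℓ : ℕ) : Set (Fin n) := {x | (x : ℕ) / 2 ^ ℓ % 2 = 1}

theorem mem_splitPairs_dyadic {ℓ : ℕ} {p : Sym2 (Fin n) × Sym2 (Fin n)} :
    p ∈ G.splitPairs (dyadicBlock ℓ) (dyadicUpper ℓ) ↔ p ∈ G.edgeNonEdgePairs ∧
      InDyadicBlock (ℓ + 1) (Fin.val '' (p.1 ∪ p.2 : Set (Fin n))) ∧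
      ¬InDyadicBlock ℓ (Fin.val '' (p.1 ∪ p.2 : Set (Fin n))) := by
  simp only [splitPairs, mem_sep_iff]
  refine and_congr_right fun _ => ?_
  have hblock : InDyadicBlock (ℓ + 1) (Fin.val '' (p.1 ∪ p.2 : Set (Fin n))) ↔
      ∀ x ∈ (p.1 ∪ p.2 : Set (Fin n)), ∀ y ∈ (p.1 ∪ p.2 : Set (Fin n)),
        dyadicBlock ℓ x = dyadicBlock ℓ y := by
    simp [InDyadicBlock, dyadicBlock, Fin.ext_iff]
  rw [← hblock]
  refine and_congr_right fun h => ?_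
  rw [h.iff_of_succ]
  simp only [dyadicUpper, forall_mem_image, mem_ofPred_eq]
  grind

theorem pairwise_disjoint_splitPairs_dyadic :
    Pairwise (Disjoint on fun ℓ : ℕ => G.splitPairs (dyadicBlock ℓ) (dyadicUpper ℓ)) := by
  intro ℓ ℓ' hne
  rw [onFun, Set.disjoint_left]
  intro p hp hp'
  rw [mem_splitPairs_dyadic] at hp hp'
  rcases hne.lt_or_gt with h | h
  · exact hp'.2.2 (hp.2.1.mono h)
  · exact hp.2.2 (hp'.2.1.mono h)

theorem iUnion_splitPairs_dyadic {L : ℕ} (hn : n ≤ 2 ^ L) :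
    ⋃ ℓ : Fin L, G.splitPairs (dyadicBlock ℓ) (dyadicUpper ℓ) = G.edgeNonEdgePairs := by
  refine Subset.antisymm (iUnion_subset fun ℓ p hp => hp.1) fun p hp => ?_
  have hS : ¬(Fin.val '' (p.1 ∪ p.2 : Set (Fin n))).Subsingleton := by
    obtain ⟨e, f⟩ := p
    induction e using Sym2.ind with | _ a b => ?_
    exact fun h => (hp.1 : G.Adj a b).ne (Fin.ext (h ⟨a, by simp, rfl⟩ ⟨b, by simp, rfl⟩))
  obtain ⟨ℓ, hℓ, hsplit⟩ := exists_dyadic_split_level hS (L := L) (by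
    rintro _ ⟨x, -, rfl⟩
    exact x.2.trans_le hn)
  exact mem_iUnion.2 ⟨⟨ℓ, hℓ⟩, G.mem_splitPairs_dyadic.2 ⟨hp, hsplit⟩⟩

theorem isRectPartition_edgeNonEdgePairs {L : ℕ} (hn : n ≤ 2 ^ L) :
    IsRectPartition G.edgeNonEdgePairs
      (fun i : Fin L × SplitCell (Fin n) (Fin n) =>
        G.edgeSet ∩ G.cellEdges (dyadicBlock i.1) (dyadicUpper i.1) i.2)
      (fun i => Gᶜ.edgeSet ∩ G.cellNonEdges (dyadicBlock i.1) (dyadicUpper i.1) i.2) := by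
  rw [← G.iUnion_splitPairs_dyadic hn]
  exact .iUnion (G.pairwise_disjoint_splitPairs_dyadic.comp_of_injective Fin.val_injective)
    fun ℓ => G.isRectPartition_splitPairs _ _

end DyadicLevels

end SimpleGraph

theorem natLog_add_one_le_two_mul_logb {n : ℕ} (hn : 2 ≤ n) :
    (Nat.log 2 n + 1 : ℝ) ≤ 2 * Real.logb 2 n := by
  have hlog := Real.natLog_le_logb n 2
  have hone : 1 ≤ Real.logb 2 n := by
    rw [← Real.logb_self_eq_one one_lt_two]
    exact Real.logb_le_logb_of_le one_lt_two two_pos (by exact_mod_cast hn)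
  push_cast at hlog
  linarith

/-- For any graph `G` on `n ≥ 2` vertices, the set of disjoint edge/non-edge pairs can
be partitioned into `O(n log n)` products of a set of edges and a set of non-edges. -/
theorem edge_nonedge_partition :
    ∃ C : ℝ, ∀ n : ℕ, 2 ≤ n → ∀ G : SimpleGraph (Fin n),
      ∀ (nonEdges : Set (Sym2 (Fin n))),
        nonEdges = {s | ¬ s.IsDiag ∧ s ∉ G.edgeSet} →
      ∀ (D : Set (Sym2 (Fin n) × Sym2 (Fin n))),
        D = {p | p.1 ∈ G.edgeSet ∧ p.2 ∈ nonEdges ∧ ∀ v, v ∈ p.1 → ¬ v ∈ p.2} →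
      ∃ (k : ℕ) (C' : Fin k → Set (Sym2 (Fin n))) (C'' : Fin k → Set (Sym2 (Fin n))),
        (k : ℝ) ≤ C * (n : ℝ) * Real.logb 2 (n : ℝ) ∧
        (∀ i, C' i ⊆ G.edgeSet ∧ C'' i ⊆ nonEdges) ∧
        (⋃ i, C' i ×ˢ C'' i) = D ∧
        Pairwise (fun i j => Disjoint (C' i ×ˢ C'' i) (C' j ×ˢ C'' j)) := by
  refine ⟨12, fun n hn G nonEdges hnonEdges D hD => ?_⟩
  rw [← G.edgeSet_compl] at hnonEdges
  subst hnonEdges hD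
  have hpart := (G.isRectPartition_edgeNonEdgePairs (Nat.lt_pow_succ_log_self one_lt_two n).le
    ).comp_equiv (Fintype.equivFin _).symm
  refine ⟨_, _, _, ?_, fun _ => ⟨inter_subset_left, inter_subset_left⟩, hpart⟩
  have hcard := natLog_add_one_le_two_mul_logb hn
  simp only [Fintype.card_prod, Fintype.card_fin, SimpleGraph.SplitCell.card]
  push_cast
  nlinarith
end
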